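/- Let (C,R) be a directed graph with ℓ = t = 1 that is not strongly connected and has |C'| = 1. Fix j ∈ C'' such that some arc with tail j leaves the strong component C''(j) containing j, and such that W(j) ⊆ C''(j). Then the sets {U(i) : i ∈ W(j)} are pairwise disjoint and ⋃_{i ∈ W(j)} U(i) = U(C''(j)), where U(C''(j)) = {k ∈ C'' : every directed path from k to C' traverses C''(j)}. -/

import Mathlib

/-!
Since every vertex reaches the sink `r`, two sets `U(i)`, `U(i')` that meet are nested: on a
path from a common vertex to `r`, the first of `i, i'` to be visited lies in `U` of the other,
and `i ∈ U(i')`, `i' ∈ U(i)` force `i = i'`. So disjointness on `W(j)` amounts to ruling out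
`i ∈ U(i')` for distinct `i, i' ∈ W(j)`, with `i` in a block `U ∈ C''_{j-inarb}`. If `i' ∈ U`,
this contradicts the disjointness of the decomposition of `U`. Otherwise the path from `i` to
`j` inside `U`, followed by the arc leaving `C''(j)`, avoids `i'`; its endpoint then still lies
in `U(i')`, so it reaches `i' ∈ C''(j)` and would belong to `C''(j)`.

The union is contained in `U(C''(j))` because `W(j) ⊆ C''(j)`. Conversely `U(C''(j))` itself
belongs to `C''_{j-inarb}` and decomposes into its maximal sets `U(i)`, which puts each of its
vertices into some `U(i)` with `i ∈ W(j)`.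
-/

open Finset

/-- Reachability (existence of a directed walk) in the directed graph with arc set `R`. -/
def Reach {c : ℕ} (R : Finset (Fin c × Fin c)) (a b : Fin c) : Prop :=
  Relation.ReflTransGen (fun x y => (x, y) ∈ R) a b

/-- `p` is a directed path in the graph with arc set `R`. -/
def IsDipath {c : ℕ} (R : Finset (Fin c × Fin c)) (p : List (Fin c)) : Prop :=
  p ≠ [] ∧ p.Nodup ∧ p.Chain' (fun a b => (a, b) ∈ R)

/-- `p` is a directed path from `a` to `b` in the graph with arc set `R`. -/
def IsDipathFromTo {c : ℕ} (R : Finset (Fin c × Fin c)) (p : List (Fin c))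
    (a b : Fin c) : Prop :=
  IsDipath R p ∧ p.head? = some a ∧ p.getLast? = some b

/-- There is a directed path from `a` to `b` all of whose intermediate steps stay in `S`
(for `a ∈ S` this says that there is a directed path from `a` to `b` with vertex set
contained in `S`). -/
def ReachIn {c : ℕ} (R : Finset (Fin c × Fin c)) (S : Finset (Fin c))
    (a b : Fin c) : Prop :=
  Relation.ReflTransGen (fun x y => (x, y) ∈ R ∧ x ∈ S ∧ y ∈ S) a b

/-- The set of arcs of `R` entering the vertex set `U`. -/
def arcsIn {c : ℕ} (R : Finset (Fin c × Fin c)) (U : Finset (Fin c)) :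
    Finset (Fin c × Fin c) :=
  R.filter (fun a => a.1 ∉ U ∧ a.2 ∈ U)

/-- The set of arcs of `R` leaving the vertex set `U`. -/
def arcsOut {c : ℕ} (R : Finset (Fin c × Fin c)) (U : Finset (Fin c)) :
    Finset (Fin c × Fin c) :=
  R.filter (fun a => a.1 ∈ U ∧ a.2 ∉ U)

/-- For a graph whose unique absorbing strong component is `{r}` (so `C'' = C \ {r}`),
`Uset R r i = U(i) = {k ∈ C : every directed path from k to r traverses i}`. -/
noncomputable def Uset {c : ℕ} (R : Finset (Fin c × Fin c)) (r i : Fin c) :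
    Finset (Fin c) :=
  @Finset.filter _ (fun k => ∀ p : List (Fin c), IsDipathFromTo R p k r → i ∈ p)
    (Classical.decPred _) Finset.univ

/-- `U ∈ C''_{j-inarb}`: `U ⊆ C'' = C \ {r}`, every vertex of `U` has a directed path to
`j` with vertex set contained in `U`, and every vertex of `C'' \ U` has a directed path
to `C' = {r}` with vertex set contained in `C \ U`. -/
def Jinarb {c : ℕ} (R : Finset (Fin c × Fin c)) (r j : Fin c)
    (U : Finset (Fin c)) : Prop :=
  U ⊆ Finset.univ.erase r ∧
    (∀ i' ∈ U, ReachIn R U i' j) ∧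
    (∀ i' ∈ Finset.univ.erase r \ U, ReachIn R (Finset.univ \ U) i' r)

/-- The vertex set of the strong component of the graph containing `j`. -/
noncomputable def SCC {c : ℕ} (R : Finset (Fin c × Fin c)) (j : Fin c) :
    Finset (Fin c) :=
  @Finset.filter _ (fun k => Reach R j k ∧ Reach R k j) (Classical.decPred _) Finset.univ

/-- `I` is a subset of `C'' = C \ {r}` such that the sets `U(i)`, `i ∈ I`, are pairwise
disjoint with union `U`. -/
def IsPartitionInto {c : ℕ} (R : Finset (Fin c × Fin c)) (r : Fin c)
    (U I : Finset (Fin c)) : Prop :=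
  I ⊆ Finset.univ.erase r ∧
    (↑I : Set (Fin c)).PairwiseDisjoint (fun i => Uset R r i) ∧
    U = I.biUnion (Uset R r)

/-- `W(j) = ⋃_{U ∈ C''_{j-inarb}} I_U`, where `I_U` is the unique subset of `C''` with
`U = ⋃*_{i ∈ I_U} U(i)` (pairwise disjoint union). -/
def Wset {c : ℕ} (R : Finset (Fin c × Fin c)) (r j : Fin c) : Set (Fin c) :=
  {i | ∃ U I : Finset (Fin c), Jinarb R r j U ∧ IsPartitionInto R r U I ∧ i ∈ I}

/-- `U(C''(j)) = {k ∈ C'' : every directed path from k to r traverses C''(j)}`. -/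
noncomputable def UsetSC {c : ℕ} (R : Finset (Fin c × Fin c)) (r j : Fin c) :
    Finset (Fin c) :=
  @Finset.filter _
    (fun k => ∀ p : List (Fin c), IsDipathFromTo R p k r → ∃ x ∈ p, x ∈ SCC R j)
    (Classical.decPred _) (Finset.univ.erase r)

variable {c : ℕ} {R : Finset (Fin c × Fin c)} {S T : Finset (Fin c)} {p : List (Fin c)}
  {a b v : Fin c}

namespace IsDipathFromTo

theorem singleton (R : Finset (Fin c × Fin c)) (a : Fin c) : IsDipathFromTo R [a] a a :=
  ⟨⟨by simp, by simp, List.isChain_singleton _⟩, rfl, rfl⟩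

theorem head_mem (h : IsDipathFromTo R p a b) : a ∈ p :=
  List.mem_of_mem_head? h.2.1

theorem getLast_mem (h : IsDipathFromTo R p a b) : b ∈ p :=
  List.mem_of_mem_getLast? h.2.2

theorem split (h : IsDipathFromTo R p a b) (hv : v ∈ p) :
    ∃ q₁ q₂, IsDipathFromTo R q₁ a v ∧ IsDipathFromTo R q₂ v b ∧ q₁ ⊆ p ∧ q₂ ⊆ p ∧
      ∀ x ∈ q₁, x ∈ q₂ → x = v := by
  obtain ⟨s, t, rfl⟩ := List.append_of_mem hv
  obtain ⟨⟨-, hnd, hch⟩, ha, hb⟩ := h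
  replace hch : (s ++ v :: t).IsChain (fun x y => (x, y) ∈ R) := hch
  have hch' : ((s ++ [v]) ++ t).IsChain (fun x y => (x, y) ∈ R) := by simpa using hch
  refine ⟨s ++ [v], v :: t, ⟨⟨by simp, ?_, hch'.left_of_append⟩, ?_, by simp⟩,
    ⟨⟨by simp, hnd.sublist (by simp), hch.right_of_append⟩, rfl, by simpa using hb⟩,
    fun x => by simp only [List.mem_append, List.mem_cons]; tauto,
    fun x => by simp only [List.mem_append, List.mem_cons]; tauto, ?_⟩
  · exact hnd.sublist (by simp)
  · rw [← ha]; cases s <;> rfl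
  · intro x hx₁ hx₂
    simp only [List.mem_append, List.mem_singleton] at hx₁
    rcases hx₁ with hxs | rfl
    · exact (List.disjoint_of_nodup_append hnd hxs hx₂).elim
    · rfl

theorem reachIn (h : IsDipathFromTo R p a b) (hS : ∀ x ∈ p, x ∈ S) : ReachIn R S a b := by
  obtain ⟨⟨hne, -, hch⟩, ha, hb⟩ := h
  replace hch : p.IsChain (fun x y => (x, y) ∈ R) := hch
  have := List.relationReflTransGen_of_exists_isChain p
    (r := fun x y => (x, y) ∈ R ∧ x ∈ S ∧ y ∈ S)
    (hch.imp_of_mem_imp fun x y hx hy hxy => ⟨hxy, hS x hx, hS y hy⟩) hne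
  rwa [(List.head_eq_iff_head?_eq_some hne).2 ha, List.getLast_of_mem_getLast? hb] at this

end IsDipathFromTo

theorem reachIn_univ_iff : ReachIn R univ a b ↔ Reach R a b := by
  simp [ReachIn, Reach]

theorem IsDipathFromTo.reach (h : IsDipathFromTo R p a b) : Reach R a b :=
  reachIn_univ_iff.1 (h.reachIn fun x _ => mem_univ x)

namespace ReachIn

theorem mono (hST : S ⊆ T) (h : ReachIn R S a b) : ReachIn R T a b :=
  Relation.ReflTransGen.mono (fun _ _ hxy => ⟨hxy.1, hST hxy.2.1, hST hxy.2.2⟩) _ _ h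

theorem mem_of_mem (h : ReachIn R S a b) (ha : a ∈ S) : b ∈ S := by
  induction h with
  | refl => exact ha
  | tail _ hstep _ => exact hstep.2.2

theorem eq_of_notMem (h : ReachIn R S a b) (ha : a ∉ S) : a = b := by
  rcases h.cases_head with h | ⟨_, hstep, _⟩
  · exact h
  · exact absurd hstep.2.1 ha

theorem exists_dipath (h : ReachIn R S a b) (ha : a ∈ S) :
    ∃ p, IsDipathFromTo R p a b ∧ ∀ x ∈ p, x ∈ S := by
  induction h with
  | refl => exact ⟨[a], .singleton R a, by simpa using ha⟩
  | @tail b' b _ hstep ih =>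
    obtain ⟨p, hp, hpS⟩ := ih
    by_cases hb : b ∈ p
    · obtain ⟨q, -, hq, -, hqp, -, -⟩ := hp.split hb
      exact ⟨q, hq, fun x hx => hpS x (hqp hx)⟩
    · refine ⟨p ++ [b], ⟨⟨by simp, ?_, ?_⟩, ?_, by simp⟩, ?_⟩
      · exact hp.1.2.1.append (by simp) (by simpa using hb)
      · exact hp.1.2.2.append (by simp) (by simpa [hp.2.2] using hstep.1)
      · rw [List.head?_append, hp.2.1]; rfl
      · simpa [or_imp, forall_and] using ⟨hpS, hstep.2.2⟩

end ReachIn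

theorem Reach.exists_dipath (h : Reach R a b) : ∃ p, IsDipathFromTo R p a b :=
  let ⟨p, hp, _⟩ := (reachIn_univ_iff.2 h).exists_dipath (mem_univ a)
  ⟨p, hp⟩

theorem forall_dipath_exists_mem_iff (hk : a ∉ T) :
    (∀ p, IsDipathFromTo R p a b → ∃ x ∈ p, x ∈ T) ↔ ¬ ReachIn R Tᶜ a b := by
  constructor
  · intro h hab
    obtain ⟨p, hp, hpT⟩ := hab.exists_dipath (mem_compl.2 hk)
    obtain ⟨x, hx, hxT⟩ := h p hp
    exact mem_compl.1 (hpT x hx) hxT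
  · intro h p hp
    by_contra! hpT
    exact h (hp.reachIn fun x hx => mem_compl.2 (hpT x hx))

section Uset

variable {r i i' l k y : Fin c}

theorem mem_uset : k ∈ Uset R r i ↔ ∀ p, IsDipathFromTo R p k r → i ∈ p := by
  simp [Uset]

theorem mem_uset_iff_of_ne (hki : k ≠ i) : k ∈ Uset R r i ↔ ¬ ReachIn R {i}ᶜ k r := by
  rw [← forall_dipath_exists_mem_iff (by simpa using hki)]
  simp [Uset]

theorem self_mem_uset : i ∈ Uset R r i :=
  mem_uset.2 fun _ hp => hp.head_mem

theorem eq_of_mem_uset_self (h : r ∈ Uset R r i) : i = r := by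
  simpa using mem_uset.1 h [r] (.singleton R r)

theorem reach_of_mem_uset (hk : Reach R k r) (h : k ∈ Uset R r i) : Reach R k i := by
  obtain ⟨p, hp⟩ := hk.exists_dipath
  obtain ⟨q, -, hq, -, -, -, -⟩ := hp.split (mem_uset.1 h p hp)
  exact hq.reach

theorem mem_uset_of_reachIn (hk : k ∈ Uset R r i) (h : ReachIn R {i}ᶜ k y) :
    y ∈ Uset R r i := by
  by_cases hki : k = i
  · rw [← h.eq_of_notMem (by simp [hki]), hki]
    exact self_mem_uset
  by_cases hyi : y = i
  · rw [hyi]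
    exact self_mem_uset
  rw [mem_uset_iff_of_ne hyi]
  exact fun hy => (mem_uset_iff_of_ne hki).1 hk (h.trans hy)

theorem uset_subset_uset (h : i ∈ Uset R r l) : Uset R r i ⊆ Uset R r l := by
  intro k hk
  refine mem_uset.2 fun p hp => ?_
  obtain ⟨-, q, -, hq, -, hqp, -⟩ := hp.split (mem_uset.1 hk p hp)
  exact hqp (mem_uset.1 h q hq)

theorem eq_of_mem_uset_of_mem_uset (hi : Reach R i r) (h₁ : i ∈ Uset R r i')
    (h₂ : i' ∈ Uset R r i) : i = i' := by
  obtain ⟨p, hp⟩ := hi.exists_dipath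
  obtain ⟨q₁, q₂, hq₁, hq₂, -, -, hq⟩ := hp.split (mem_uset.1 h₁ p hp)
  exact hq i hq₁.head_mem (mem_uset.1 h₂ q₂ hq₂)

theorem mem_uset_or_mem_uset (hk : Reach R k r) (h : k ∈ Uset R r i) (h' : k ∈ Uset R r i') :
    i ∈ Uset R r i' ∨ i' ∈ Uset R r i := by
  obtain ⟨p, hp⟩ := hk.exists_dipath
  obtain ⟨q, -, hq, -, -, -, -⟩ := hp.split (mem_uset.1 h p hp)
  by_cases hi'q : i' ∈ q
  · obtain ⟨s, t, hs, ht, -, -, hst⟩ := hq.split hi'q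
    by_cases hii' : i = i'
    · exact .inl (hii' ▸ self_mem_uset)
    refine .inr (mem_uset_of_reachIn h (hs.reachIn fun x hx => ?_))
    simpa using fun hxi : x = i => hii' (hst i (hxi ▸ hx) ht.getLast_mem)
  · exact .inl (mem_uset_of_reachIn h' (hq.reachIn fun x hx => by
      simpa using ne_of_mem_of_not_mem hx hi'q))

end Uset

section UsetSC

variable {r j k : Fin c}

theorem mem_scc : k ∈ SCC R j ↔ Reach R j k ∧ Reach R k j := by
  simp [SCC]

theorem eq_of_reach_of_sink (habs : ∀ q ∈ R, q.1 ≠ r) (h : Reach R r k) : k = r := by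
  induction h with
  | refl => rfl
  | tail _ hstep ih => exact absurd ih (habs _ hstep)

theorem notMem_scc_of_sink (habs : ∀ q ∈ R, q.1 ≠ r) (hj : j ≠ r) : r ∉ SCC R j :=
  fun hr => hj (eq_of_reach_of_sink habs (mem_scc.1 hr).2)

theorem reachIn_scc (h : k ∈ SCC R j) : ReachIn R (SCC R j) k j := by
  obtain ⟨hjk, hkj⟩ := mem_scc.1 h
  clear h
  induction hkj using Relation.ReflTransGen.head_induction_on with
  | refl => exact .refl
  | head hstep hrest ih =>
    exact .head ⟨hstep, mem_scc.2 ⟨hjk, .head hstep hrest⟩, mem_scc.2 ⟨hjk.tail hstep, hrest⟩⟩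
      (ih (hjk.tail hstep))

theorem mem_usetSC : k ∈ UsetSC R r j ↔
    k ≠ r ∧ ∀ p, IsDipathFromTo R p k r → ∃ x ∈ p, x ∈ SCC R j := by
  simp [UsetSC]

theorem mem_usetSC_iff_of_notMem (hk : k ∉ SCC R j) :
    k ∈ UsetSC R r j ↔ k ≠ r ∧ ¬ ReachIn R (SCC R j)ᶜ k r := by
  rw [mem_usetSC, forall_dipath_exists_mem_iff hk]

theorem scc_subset_usetSC (habs : ∀ q ∈ R, q.1 ≠ r) (hj : j ≠ r) :
    SCC R j ⊆ UsetSC R r j := fun k hk =>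
  mem_usetSC.2 ⟨fun hkr => notMem_scc_of_sink habs hj (hkr ▸ hk),
    fun _ hp => ⟨k, hp.head_mem, hk⟩⟩

theorem uset_subset_usetSC {i : Fin c} (hi : i ∈ UsetSC R r j) :
    Uset R r i ⊆ UsetSC R r j := by
  intro k hk
  refine mem_usetSC.2 ⟨fun hkr => (mem_usetSC.1 hi).1 (eq_of_mem_uset_self (hkr ▸ hk)),
    fun p hp => ?_⟩
  obtain ⟨-, q, -, hq, -, hqp, -⟩ := hp.split (mem_uset.1 hk p hp)
  obtain ⟨x, hxq, hx⟩ := (mem_usetSC.1 hi).2 q hq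
  exact ⟨x, hqp hxq, hx⟩

theorem reachIn_usetSC (habs : ∀ q ∈ R, q.1 ≠ r) (hj : j ≠ r) (hk : Reach R k r)
    (hkU : k ∈ UsetSC R r j) : ReachIn R (UsetSC R r j) k j := by
  induction hk using Relation.ReflTransGen.head_induction_on with
  | refl => exact absurd rfl (mem_usetSC.1 hkU).1
  | @head k x hkx hxr ih =>
    by_cases hkS : k ∈ SCC R j
    · exact (reachIn_scc hkS).mono (scc_subset_usetSC habs hj)
    obtain ⟨-, hkS'⟩ := (mem_usetSC_iff_of_notMem hkS).1 hkU
    have hxU : x ∈ UsetSC R r j := by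
      by_cases hxS : x ∈ SCC R j
      · exact scc_subset_usetSC habs hj hxS
      refine (mem_usetSC_iff_of_notMem hxS).2 ⟨?_, fun hx => hkS' (.head ⟨hkx, ?_, ?_⟩ hx)⟩
      · rintro rfl
        exact hkS' (.single ⟨hkx, mem_compl.2 hkS, mem_compl.2 hxS⟩)
      all_goals simpa
    exact .head ⟨hkx, hkU, hxU⟩ (ih hxU)

theorem reachIn_compl_usetSC (hkr : k ≠ r) (hk : k ∉ UsetSC R r j) :
    ReachIn R (UsetSC R r j)ᶜ k r := by
  obtain ⟨p, hp, hpS⟩ : ∃ p, IsDipathFromTo R p k r ∧ ∀ x ∈ p, x ∉ SCC R j := by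
    simpa [mem_usetSC, hkr] using hk
  refine hp.reachIn fun x hx => mem_compl.2 fun hxU => ?_
  obtain ⟨-, q, -, hq, -, hqp, -⟩ := hp.split hx
  obtain ⟨z, hzq, hz⟩ := (mem_usetSC.1 hxU).2 q hq
  exact hpS z (hqp hzq) hz

theorem jinarb_usetSC (habs : ∀ q ∈ R, q.1 ≠ r) (hj : j ≠ r) (hreach : ∀ k, Reach R k r) :
    Jinarb R r j (UsetSC R r j) := by
  refine ⟨fun k hk => mem_erase.2 ⟨(mem_usetSC.1 hk).1, mem_univ k⟩,
    fun k hk => reachIn_usetSC habs hj (hreach k) hk, fun k hk => ?_⟩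
  obtain ⟨hkr, hkU⟩ := mem_sdiff.1 hk
  rw [← compl_eq_univ_sdiff]
  exact reachIn_compl_usetSC (ne_of_mem_erase hkr) hkU

end UsetSC

section Wset

variable {r i i' j y : Fin c}

theorem exists_isPartitionInto (hreach : ∀ k, Reach R k r) {W : Finset (Fin c)}
    (hW : W ⊆ univ.erase r) (hclosed : ∀ i ∈ W, Uset R r i ⊆ W) :
    ∃ I, IsPartitionInto R r W I := by
  classical
  set I := W.filter fun i => ∀ l ∈ W, i ∈ Uset R r l → l = i
  refine ⟨I, fun i hi => hW (mem_filter.1 hi).1, fun x hx x' hx' hne => ?_, ?_⟩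
  · refine disjoint_left.2 fun k hk hk' => hne ?_
    rcases mem_uset_or_mem_uset (hreach k) hk hk' with h | h
    · exact ((mem_filter.1 hx).2 x' (mem_filter.1 hx').1 h).symm
    · exact (mem_filter.1 hx').2 x (mem_filter.1 hx).1 h
  ext k
  refine ⟨fun hk => ?_, fun hk => ?_⟩
  · obtain ⟨_, hle, hmax⟩ := (W.image (Uset R r)).exists_le_maximal (mem_image_of_mem _ hk)
    obtain ⟨m, hm, rfl⟩ := mem_image.1 hmax.prop
    refine mem_biUnion.2 ⟨m, mem_filter.2 ⟨hm, fun l hl hml => ?_⟩, hle self_mem_uset⟩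
    have hlm := hmax.eq_of_le (mem_image_of_mem _ hl) (uset_subset_uset hml)
    exact (eq_of_mem_uset_of_mem_uset (hreach m) hml (hlm ▸ self_mem_uset)).symm
  · obtain ⟨i, hi, hki⟩ := mem_biUnion.1 hk
    exact hclosed i (mem_filter.1 hi).1 hki

theorem eq_of_mem_wset_of_mem_uset (hreach : ∀ k, Reach R k r) (harc : (j, y) ∈ R)
    (hy : y ∉ SCC R j) (hWj : Wset R r j ⊆ ↑(SCC R j)) (hi : i ∈ Wset R r j)
    (hi' : i' ∈ Wset R r j) (h : i ∈ Uset R r i') : i = i' := by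
  have hi'S : i' ∈ SCC R j := hWj hi'
  obtain ⟨_, I, hU, ⟨-, hdisj, rfl⟩, hiI⟩ := hi
  by_cases hi'U : i' ∈ I.biUnion (Uset R r)
  · obtain ⟨l, hl, hi'l⟩ := mem_biUnion.1 hi'U
    obtain rfl : l = i := by
      by_contra hli
      exact disjoint_left.1 (hdisj hiI hl (Ne.symm hli)) self_mem_uset (uset_subset_uset hi'l h)
    exact eq_of_mem_uset_of_mem_uset (hreach l) h hi'l
  by_contra hne
  have hUi' : I.biUnion (Uset R r) ⊆ {i'}ᶜ := fun x hx => by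
    simpa using ne_of_mem_of_not_mem hx hi'U
  have hij := hU.2.1 i (mem_biUnion.2 ⟨i, hiI, self_mem_uset⟩)
  have hjU := hij.mem_of_mem (mem_biUnion.2 ⟨i, hiI, self_mem_uset⟩)
  have hyi' : y ∈ ({i'}ᶜ : Finset (Fin c)) := by
    simpa using ne_of_mem_of_not_mem hi'S hy |>.symm
  have hyU : y ∈ Uset R r i' :=
    mem_uset_of_reachIn h ((hij.mono hUi').tail ⟨harc, hUi' hjU, hyi'⟩)
  exact hy (mem_scc.2
    ⟨.single harc, (reach_of_mem_uset (hreach y) hyU).trans (mem_scc.1 hi'S).2⟩)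

end Wset

theorem stmt17_general {c : ℕ}
    (R : Finset (Fin c × Fin c))
    -- `{r} = C'` is the vertex set of the unique absorbing strong component (`ℓ = t = 1`):
    (r : Fin c)
    (habs : ∀ p ∈ R, p.1 ≠ r)
    (hreach : ∀ k : Fin c, Reach R k r)
    (j : Fin c) (hj : j ≠ r)
    -- some arc with tail `j` leaves the strong component `C''(j)` containing `j`:
    (hout : (arcsOut R {j} ∩ arcsOut R (SCC R j)).Nonempty)
    (hWj : Wset R r j ⊆ ↑(SCC R j)) :
    (Wset R r j).PairwiseDisjoint (fun i => ((Uset R r i : Finset (Fin c)) : Set (Fin c))) ∧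
    (⋃ i ∈ Wset R r j, ((Uset R r i : Finset (Fin c)) : Set (Fin c))) = ↑(UsetSC R r j) := by
  obtain ⟨⟨x, y⟩, hxy⟩ := hout
  obtain ⟨harc, hy⟩ : (j, y) ∈ R ∧ y ∉ SCC R j := by
    simp only [arcsOut, mem_inter, mem_filter, mem_singleton] at hxy
    exact ⟨hxy.1.2.1 ▸ hxy.1.1, hxy.2.2.2⟩
  have hdom : ∀ {i i'}, i ∈ Wset R r j → i' ∈ Wset R r j → i ∈ Uset R r i' → i = i' :=
    eq_of_mem_wset_of_mem_uset hreach harc hy hWj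
  refine ⟨fun i hi i' hi' hne => disjoint_coe.2 (disjoint_left.2 fun k hk hk' => hne ?_), ?_⟩
  · rcases mem_uset_or_mem_uset (hreach k) hk hk' with h | h
    · exact hdom hi hi' h
    · exact (hdom hi' hi h).symm
  refine subset_antisymm (Set.iUnion₂_subset fun i hi => ?_) fun k hk => ?_
  · exact coe_subset.2 (uset_subset_usetSC (scc_subset_usetSC habs hj (hWj hi)))
  have hU := jinarb_usetSC habs hj hreach
  obtain ⟨I, hI⟩ := exists_isPartitionInto hreach hU.1 fun i => uset_subset_usetSC
  obtain ⟨i, hi, hki⟩ := mem_biUnion.1 (hI.2.2 ▸ hk)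
  exact Set.mem_biUnion ⟨_, I, hU, hI, hi⟩ hki

theorem stmt17 {c : ℕ}
    (R : Finset (Fin c × Fin c)) (hloop : ∀ v : Fin c, (v, v) ∉ R)
    -- `{r} = C'` is the vertex set of the unique absorbing strong component (`ℓ = t = 1`):
    (r : Fin c)
    (habs : ∀ p ∈ R, p.1 ≠ r)
    (hreach : ∀ k : Fin c, Reach R k r)
    (hweak : ∀ a b : Fin c,
      Relation.ReflTransGen (fun x y => (x, y) ∈ R ∨ (y, x) ∈ R) a b)
    (hnsc : ¬ ∀ a b : Fin c, Reach R a b)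
    (j : Fin c) (hj : j ≠ r)
    -- some arc with tail `j` leaves the strong component `C''(j)` containing `j`:
    (hout : (arcsOut R {j} ∩ arcsOut R (SCC R j)).Nonempty)
    (hWj : Wset R r j ⊆ ↑(SCC R j)) :
    (Wset R r j).PairwiseDisjoint (fun i => ((Uset R r i : Finset (Fin c)) : Set (Fin c))) ∧
    (⋃ i ∈ Wset R r j, ((Uset R r i : Finset (Fin c)) : Set (Fin c))) = ↑(UsetSC R r j) :=
  stmt17_general R r habs hreach j hj hout hWj
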